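/- Let ν₀ be a probability measure on C(Ω;ℝ), and fix points x₁,…,x_m ∈ Ω and signs y₁,…,y_m ∈ {±1} such that ν₀({u : u(x_j) = 0 for some j}) = 0 and ν₀(B) > 0 where B = {u : y_j u(x_j) > 0 for all j}. For γ > 0 define Φ_γ(u) = Σ_j (1/(2γ²))|y_j − S(u(x_j))|², where S is the sign function, and the measure ν_γ(du) = Z_γ^{−1} e^{−Φ_γ(u)} ν₀(du). Then ν_γ converges weakly, as γ → 0, to the conditioned measure ν(du) = ν₀(B)^{−1} 1_B(u) ν₀(du). -/

import Mathlib

/-!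
The density `e^{-Φ_γ}` takes values in `[0, 1]` and converges pointwise to `1_B` as `γ → 0⁺`:
`Φ_γ(u) = K(u) / (2γ²)` with `K(u) = ∑ⱼ |yⱼ - S(u(xⱼ))|²`, and since `S(t) = ±1` exactly when
`±t > 0`, `K` vanishes on `B` and is positive off `B`, where therefore `Φ_γ → ∞`. Dominated
convergence then gives `Z_γ → ν₀(B)` and `∫ g e^{-Φ_γ} dν₀ → ∫_B g dν₀` for every bounded
continuous `g`, and the quotient converges.
-/

open MeasureTheory Filter Topology

/-- The sign function: `S(t) = 1` for `t > 0`, `−1` for `t < 0`, `S(0) = 0`. -/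
noncomputable def signFun (t : ℝ) : ℝ :=
  if t > 0 then 1 else if t < 0 then -1 else 0

/-- The Bayesian level set misfit `Φ_γ(u) = ∑_j (1/(2γ²))|y_j − S(u(x_j))|²`. -/
noncomputable def levelSetMisfit {Ω : Type*} [TopologicalSpace Ω]
    {m : ℕ} (x : Fin m → Ω) (y : Fin m → ℝ) (γ : ℝ) (u : C(Ω, ℝ)) : ℝ :=
  ∑ j, (1 / (2 * γ ^ 2)) * |y j - signFun (u (x j))| ^ 2

section NormalizedDensity

variable {α : Type*} [MeasurableSpace α]

theorem integral_inv_smul_withDensity_ofReal (μ : Measure α) {f : α → ℝ} (hf : AEMeasurable f μ)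
    (hf0 : 0 ≤ᵐ[μ] f) (g : α → ℝ) :
    ∫ a, g a ∂((ENNReal.ofReal (∫ a, f a ∂μ))⁻¹ • μ.withDensity fun a => ENNReal.ofReal (f a)) =
      (∫ a, f a ∂μ)⁻¹ * ∫ a, f a * g a ∂μ := by
  rw [integral_smul_measure, integral_withDensity_eq_integral_toReal_smul₀ hf.ennreal_ofReal
    (ae_of_all _ fun _ => ENNReal.ofReal_lt_top), ENNReal.toReal_inv,
    ENNReal.toReal_ofReal (integral_nonneg_of_ae hf0), smul_eq_mul]
  congr 1
  refine integral_congr_ae ?_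
  filter_upwards [hf0] with a ha
  rw [ENNReal.toReal_ofReal ha, smul_eq_mul]

variable {ι : Type*} {l : Filter ι} [l.IsCountablyGenerated] {μ : Measure α} [IsFiniteMeasure μ]
  {s : Set α}

theorem tendsto_integral_mul_of_tendsto_indicator_one (hs : MeasurableSet s) {F : ι → α → ℝ}
    (hF : ∀ i, AEStronglyMeasurable (F i) μ) (hF1 : ∀ i a, |F i a| ≤ 1)
    (hlim : ∀ᵐ a ∂μ, Tendsto (fun i => F i a) l (𝓝 (s.indicator 1 a)))
    {g : α → ℝ} (hg : AEStronglyMeasurable g μ) {M : ℝ} (hM : ∀ a, |g a| ≤ M) :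
    Tendsto (fun i => ∫ a, F i a * g a ∂μ) l (𝓝 (∫ a in s, g a ∂μ)) := by
  have hlimit : s.indicator g = fun a => s.indicator 1 a * g a := by
    ext a
    rw [← Set.indicator_mul_left]
    simp only [Pi.one_apply, one_mul]
  rw [← integral_indicator hs, hlimit]
  refine tendsto_integral_filter_of_dominated_convergence (fun _ => M)
    (Eventually.of_forall fun i => (hF i).mul hg)
    (Eventually.of_forall fun i => ae_of_all _ fun a => ?_) (integrable_const M)
    (hlim.mono fun a ha => ha.mul_const (g a))
  rw [Real.norm_eq_abs, abs_mul]
  exact (mul_le_of_le_one_left (abs_nonneg _) (hF1 i a)).trans (hM a)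

theorem tendsto_integral_inv_smul_withDensity_ofReal (hs : MeasurableSet s) (hμs : μ s ≠ 0)
    {f : ι → α → ℝ} (hf : ∀ i, AEMeasurable (f i) μ) (hf0 : ∀ i a, 0 ≤ f i a)
    (hf1 : ∀ i a, f i a ≤ 1) (hlim : ∀ᵐ a ∂μ, Tendsto (fun i => f i a) l (𝓝 (s.indicator 1 a)))
    {g : α → ℝ} (hg : AEStronglyMeasurable g μ) {M : ℝ} (hM : ∀ a, |g a| ≤ M) :
    Tendsto
      (fun i => ∫ a, g a ∂((ENNReal.ofReal (∫ a, f i a ∂μ))⁻¹ •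
        μ.withDensity fun a => ENNReal.ofReal (f i a)))
      l (𝓝 (∫ a, g a ∂((μ s)⁻¹ • μ.restrict s))) := by
  have hf_abs i a : |f i a| ≤ 1 := abs_le.2 ⟨by linarith [hf0 i a], hf1 i a⟩
  have hZ := tendsto_integral_mul_of_tendsto_indicator_one hs (fun i => (hf i).aestronglyMeasurable)
    hf_abs hlim (g := fun _ => 1) aestronglyMeasurable_const (M := 1) fun _ => by simp
  simp only [mul_one, setIntegral_const, smul_eq_mul] at hZ
  simp_rw [integral_inv_smul_withDensity_ofReal μ (hf _) (ae_of_all _ (hf0 _)),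
    integral_smul_measure, ENNReal.toReal_inv, smul_eq_mul]
  exact (hZ.inv₀ (ENNReal.toReal_pos hμs (measure_ne_top μ s)).ne').mul
    (tendsto_integral_mul_of_tendsto_indicator_one hs (fun i => (hf i).aestronglyMeasurable)
      hf_abs hlim hg hM)

end NormalizedDensity

theorem tendsto_exp_neg_one_div_two_mul_sq_mul {K : ℝ} (hK : 0 < K) :
    Tendsto (fun γ : ℝ => Real.exp (-(1 / (2 * γ ^ 2) * K))) (𝓝[>] 0) (𝓝 0) := by
  have hsq : Tendsto (fun γ : ℝ => 2 * γ ^ 2) (𝓝[>] 0) (𝓝[>] 0) := by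
    refine tendsto_nhdsWithin_iff.2 ⟨?_, eventually_nhdsWithin_of_forall fun γ (hγ : 0 < γ) =>
      show 0 < 2 * γ ^ 2 by positivity⟩
    exact (Continuous.tendsto' (by fun_prop) 0 0 (by simp)).mono_left nhdsWithin_le_nhds
  simp_rw [one_div]
  exact Real.tendsto_exp_neg_atTop_nhds_zero.comp
    ((tendsto_inv_nhdsGT_zero.comp hsq).atTop_mul_const hK)

theorem measurable_signFun : Measurable signFun :=
  Measurable.ite measurableSet_Ioi measurable_const
    (Measurable.ite measurableSet_Iio measurable_const measurable_const)

theorem signFun_eq_iff {y t : ℝ} (hy : y = 1 ∨ y = -1) : signFun t = y ↔ 0 < y * t := by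
  unfold signFun
  rcases hy with rfl | rfl <;> split_ifs <;> constructor <;> intro <;> linarith

theorem sum_sq_abs_sub_signFun_eq_zero_iff {ι : Type*} [Fintype ι] {y t : ι → ℝ}
    (hy : ∀ j, y j = 1 ∨ y j = -1) :
    ∑ j, |y j - signFun (t j)| ^ 2 = 0 ↔ ∀ j, y j * t j > 0 := by
  simp only [Finset.sum_eq_zero_iff_of_nonneg fun _ _ => sq_nonneg _, Finset.mem_univ,
    true_implies, ne_eq, OfNat.ofNat_ne_zero, not_false_eq_true, pow_eq_zero_iff, abs_eq_zero,
    sub_eq_zero]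
  exact forall_congr' fun j => eq_comm.trans (signFun_eq_iff (hy j))

section LevelSetMisfit

variable {Ω : Type*} [TopologicalSpace Ω] {m : ℕ} (x : Fin m → Ω) (y : Fin m → ℝ)

theorem levelSetMisfit_eq_mul_sum (γ : ℝ) (u : C(Ω, ℝ)) :
    levelSetMisfit x y γ u = 1 / (2 * γ ^ 2) * ∑ j, |y j - signFun (u (x j))| ^ 2 :=
  (Finset.mul_sum _ _ _).symm

theorem levelSetMisfit_nonneg (γ : ℝ) (u : C(Ω, ℝ)) : 0 ≤ levelSetMisfit x y γ u :=
  Finset.sum_nonneg fun _ _ => by positivity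

theorem measurable_levelSetMisfit [MeasurableSpace C(Ω, ℝ)] [OpensMeasurableSpace C(Ω, ℝ)]
    (γ : ℝ) : Measurable (levelSetMisfit x y γ) :=
  Finset.measurable_sum _ fun j _ => ((measurable_const.sub
    (measurable_signFun.comp (continuous_eval_const (x j)).measurable)).abs.pow_const 2).const_mul _

theorem tendsto_exp_neg_levelSetMisfit (hy : ∀ j, y j = 1 ∨ y j = -1) (u : C(Ω, ℝ)) :
    Tendsto (fun γ => Real.exp (-levelSetMisfit x y γ u)) (𝓝[>] 0)
      (𝓝 ({u : C(Ω, ℝ) | ∀ j, y j * u (x j) > 0}.indicator 1 u)) := by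
  simp_rw [levelSetMisfit_eq_mul_sum]
  by_cases hu : u ∈ {u : C(Ω, ℝ) | ∀ j, y j * u (x j) > 0}
  · rw [Set.indicator_of_mem hu, (sum_sq_abs_sub_signFun_eq_zero_iff hy).2 hu]
    simp
  · rw [Set.indicator_of_notMem hu]
    refine tendsto_exp_neg_one_div_two_mul_sq_mul (lt_of_le_of_ne (by positivity) ?_)
    exact fun h => hu ((sum_sq_abs_sub_signFun_eq_zero_iff hy).1 h.symm)

end LevelSetMisfit

theorem levelSet_small_noise_limit_general
    {Ω : Type*} [TopologicalSpace Ω]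
    [MeasurableSpace C(Ω, ℝ)] [BorelSpace C(Ω, ℝ)]
    (ν₀ : Measure C(Ω, ℝ)) [IsProbabilityMeasure ν₀]
    (m : ℕ) (x : Fin m → Ω) (y : Fin m → ℝ)
    (hy : ∀ j, y j = 1 ∨ y j = -1)
    (B : Set C(Ω, ℝ)) (hB : B = {u : C(Ω, ℝ) | ∀ j, y j * u (x j) > 0})
    (hBpos : 0 < ν₀ B)
    (νγ : ℝ → Measure C(Ω, ℝ))
    (hνγ : ∀ γ : ℝ, 0 < γ →
      νγ γ = (ENNReal.ofReal (∫ u, Real.exp (-(levelSetMisfit x y γ u)) ∂ν₀))⁻¹ •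
        ν₀.withDensity (fun u => ENNReal.ofReal (Real.exp (-(levelSetMisfit x y γ u)))))
    (ν : Measure C(Ω, ℝ)) (hν : ν = (ν₀ B)⁻¹ • ν₀.restrict B) :
    ∀ g : C(Ω, ℝ) → ℝ, Continuous g → (∃ M, ∀ u, |g u| ≤ M) →
      Tendsto (fun γ => ∫ u, g u ∂(νγ γ)) (nhdsWithin 0 (Set.Ioi 0))
        (𝓝 (∫ u, g u ∂ν)) := by
  rintro g hg ⟨M, hM⟩
  subst hB hν
  have hB_open : IsOpen {u : C(Ω, ℝ) | ∀ j, y j * u (x j) > 0} := by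
    rw [Set.ofPred_forall]
    exact isOpen_iInter_of_finite fun j =>
      isOpen_lt continuous_const (continuous_const.mul (continuous_eval_const _))
  refine (tendsto_integral_inv_smul_withDensity_ofReal hB_open.measurableSet hBpos.ne'
    (fun γ => (measurable_levelSetMisfit x y γ).neg.exp.aemeasurable)
    (fun γ u => (Real.exp_pos _).le)
    (fun γ u => Real.exp_le_one_iff.2 (neg_nonpos.2 (levelSetMisfit_nonneg x y γ u)))
    (ae_of_all _ (tendsto_exp_neg_levelSetMisfit x y hy)) hg.aestronglyMeasurable hM).congr' ?_
  filter_upwards [self_mem_nhdsWithin] with γ hγ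
  rw [hνγ γ hγ]
  rfl

/-- Small noise limit of the Bayesian level set posterior: `ν_γ ⇒ ν₀(·|B)` as `γ → 0⁺`,
where `B = {u : y_j u(x_j) > 0 ∀ j}`. Weak convergence is expressed as convergence of
integrals of all bounded continuous functionals. -/
theorem levelSet_small_noise_limit
    {Ω : Type*} [TopologicalSpace Ω]
    [MeasurableSpace C(Ω, ℝ)] [BorelSpace C(Ω, ℝ)]
    (ν₀ : Measure C(Ω, ℝ)) [IsProbabilityMeasure ν₀]
    (m : ℕ) (x : Fin m → Ω) (y : Fin m → ℝ)
    (hy : ∀ j, y j = 1 ∨ y j = -1)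
    (hzero : ν₀ {u : C(Ω, ℝ) | ∃ j, u (x j) = 0} = 0)
    (B : Set C(Ω, ℝ)) (hB : B = {u : C(Ω, ℝ) | ∀ j, y j * u (x j) > 0})
    (hBpos : 0 < ν₀ B)
    (νγ : ℝ → Measure C(Ω, ℝ))
    (hνγ : ∀ γ : ℝ, 0 < γ →
      νγ γ = (ENNReal.ofReal (∫ u, Real.exp (-(levelSetMisfit x y γ u)) ∂ν₀))⁻¹ •
        ν₀.withDensity (fun u => ENNReal.ofReal (Real.exp (-(levelSetMisfit x y γ u)))))
    (ν : Measure C(Ω, ℝ)) (hν : ν = (ν₀ B)⁻¹ • ν₀.restrict B) :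
    ∀ g : C(Ω, ℝ) → ℝ, Continuous g → (∃ M, ∀ u, |g u| ≤ M) →
      Tendsto (fun γ => ∫ u, g u ∂(νγ γ)) (nhdsWithin 0 (Set.Ioi 0))
        (𝓝 (∫ u, g u ∂ν)) :=
  levelSet_small_noise_limit_general ν₀ m x y hy B hB hBpos νγ hνγ ν hν
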